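/- Let x > y > 8 be real numbers, let a ∈ (0, 1/3), and set b = 3a/2. Assume b ∈ (0, 1/2) and 2 ≥ (2 − y^(−b)) · (1 + √(2/y))^(2·log x / log(y/2)). Then every primitive nondeficient number n ≤ x with P(n) > y and square-full part s(n) < y^a has a squarefree divisor d with y^(b/3) ≤ d ≤ y^(1/2)/√2. -/

import Mathlib

open ArithmeticFunction

/-- A positive integer `n` is nondeficient if `σ n ≥ 2n`; it is a primitive
nondeficient number (pnd) if moreover every proper divisor is deficient. -/
def Pnd (n : ℕ) : Prop :=
  0 < n ∧ 2 * n ≤ ArithmeticFunction.sigma 1 n ∧ ∀ d : ℕ, d ∣ n → d < n → ArithmeticFunction.sigma 1 d < 2 * d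

/-- The largest prime factor of `n`, with the convention `P 1 = 1`. -/
def P (n : ℕ) : ℕ := max 1 (n.primeFactors.sup _root_.id)

/-- The square-full part `s(n)` of `n`: the product of the prime powers
`p ^ (v_p(n))` over primes `p` with `v_p(n) ≥ 2`. -/
def sqfullPart (n : ℕ) : ℕ :=
  ∏ p ∈ n.primeFactors.filter (fun p => 2 ≤ n.factorization p), p ^ n.factorization p

open scoped ArithmeticFunction.sigma
open Finset Real

/-!
Put `t = y^(b/3)` and `U = √(y/2)`, so that `t² ≤ U`. If the primes `p < t` with `p ∥ n` have
product at least `t`, adding them one at a time produces a squarefree divisor in `[t, t²)`.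
Otherwise, if no prime `p ∥ n` lies in `[t, U]`, write `n = M·K` with `K` the product of the
primes `p ∥ n` above `U`. Then `M < s(n)·t < y^(a+b/3) = y^b`, and `K ≠ 1` because
`P(n) > y > s(n)` forces `P(n) ∥ n`; moreover `K ≤ x` bounds the number of prime factors of `K` by `log x / log U`.
Since `M` is a proper divisor of `n`, it is deficient, and multiplicativity of `σ` gives
`2 ≤ (2 - 1/M)·σ(K)/K < (2 - y^(-b))·(1 + 1/U)^(log x / log U)`, contradicting the hypothesis.
-/

lemma exists_subset_le_prod_lt_mul_self {ι : Type*} (s : Finset ι) {f : ι → ℝ} {t : ℝ}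
    (ht : 1 < t) (hf0 : ∀ i ∈ s, 0 ≤ f i) (hft : ∀ i ∈ s, f i < t) (hs : t ≤ ∏ i ∈ s, f i) :
    ∃ u ⊆ s, t ≤ ∏ i ∈ u, f i ∧ ∏ i ∈ u, f i < t * t := by
  classical
  induction s using Finset.induction_on with
  | empty => rw [prod_empty] at hs; linarith
  | @insert j s hj ih =>
    have hf0' : ∀ i ∈ s, 0 ≤ f i := fun i hi => hf0 i (mem_insert_of_mem hi)
    by_cases hle : t ≤ ∏ i ∈ s, f i
    · obtain ⟨u, hu, h⟩ := ih hf0' (fun i hi => hft i (mem_insert_of_mem hi)) hle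
      exact ⟨u, hu.trans (subset_insert _ _), h⟩
    refine ⟨insert j s, Subset.rfl, hs, ?_⟩
    rw [prod_insert hj]
    exact mul_lt_mul'' (hft j (mem_insert_self _ _)) (not_le.1 hle) (hf0 j (mem_insert_self _ _))
      (prod_nonneg hf0')

lemma card_le_log_div_log {ι : Type*} {s : Finset ι} {f : ι → ℝ} {U x : ℝ} (hU : 1 < U)
    (hs : ∀ i ∈ s, U ≤ f i) (hx : ∏ i ∈ s, f i ≤ x) : (s.card : ℝ) ≤ log x / log U := by
  have hpow : U ^ s.card ≤ x := by
    rw [← prod_const]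
    exact (prod_le_prod (fun _ _ => by positivity) hs).trans hx
  have := log_le_log (by positivity) hpow
  rw [log_pow] at this
  rwa [le_div_iff₀ (log_pos hU)]

lemma rpow_mul_self_le_sqrt_half {y e : ℝ} (hy : 8 ≤ y) (he : e ≤ 1 / 6) :
    y ^ e * y ^ e ≤ √(y / 2) := by
  have hy0 : 0 < y := by linarith
  calc y ^ e * y ^ e = y ^ (e + e) := (rpow_add hy0 _ _).symm
    _ ≤ y ^ (1 / 3 : ℝ) := rpow_le_rpow_of_exponent_le (by linarith) (by linarith)
    _ ≤ √(y / 2) := by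
      refine le_sqrt_of_sq_le (le_of_pow_le_pow_left₀ (n := 3) (by norm_num) (by positivity) ?_)
      have h6 : (y ^ (1 / 3 : ℝ)) ^ 6 = y ^ 2 := by
        rw [← rpow_natCast, ← rpow_mul hy0.le]
        norm_num
      rw [← pow_mul, h6]
      nlinarith

lemma two_lt_of_two_mul_le_sub_one_mul {M r C : ℝ} (hM : 1 ≤ M) (hMr : M < r) (hC : 0 < C)
    (h : 2 * M ≤ (2 * M - 1) * C) : 2 < (2 - r⁻¹) * C := by
  have hM0 : 0 < M := by linarith
  have hinv : r⁻¹ < M⁻¹ := inv_strictAnti₀ hM0 hMr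
  have h2 : 2 ≤ (2 - M⁻¹) * C := by
    rw [← mul_le_mul_iff_of_pos_left hM0]
    calc M * 2 ≤ (2 * M - 1) * C := by linarith
      _ = M * ((2 - M⁻¹) * C) := by field_simp
  nlinarith

def simplePrimeFactors (n : ℕ) : Finset ℕ := {p ∈ n.primeFactors | n.factorization p = 1}

lemma simplePrimeFactors_subset (n : ℕ) : simplePrimeFactors n ⊆ n.primeFactors :=
  filter_subset _ _

lemma prod_dvd_of_subset_primeFactors {n : ℕ} {s : Finset ℕ} (hs : s ⊆ n.primeFactors) :
    ∏ p ∈ s, p ∣ n :=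
  (prod_dvd_prod_of_subset _ _ _ hs).trans n.prod_primeFactors_dvd

lemma squarefree_prod_of_subset_primeFactors {n : ℕ} {s : Finset ℕ} (hs : s ⊆ n.primeFactors) :
    Squarefree (∏ p ∈ s, p) :=
  UniqueFactorizationMonoid.squarefree_radical.squarefree_of_dvd <| by
    rw [Nat.radical_eq_prod_primeFactors]
    exact prod_dvd_prod_of_subset _ _ _ hs

lemma factorization_ne_zero_of_mem_primeFactors {n p : ℕ} (hp : p ∈ n.primeFactors) :
    n.factorization p ≠ 0 :=
  Finsupp.mem_support_iff.1 (n.support_factorization ▸ hp)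

lemma sqfullPart_mul_prod_simplePrimeFactors {n : ℕ} (hn : n ≠ 0) :
    sqfullPart n * ∏ p ∈ simplePrimeFactors n, p = n := by
  have hsimple : simplePrimeFactors n = {p ∈ n.primeFactors | ¬ 2 ≤ n.factorization p} := by
    refine filter_congr fun p hp => ?_
    have := factorization_ne_zero_of_mem_primeFactors hp
    omega
  have hpow : ∏ p ∈ simplePrimeFactors n, p =
      ∏ p ∈ simplePrimeFactors n, p ^ n.factorization p :=
    prod_congr rfl fun p hp => by rw [(mem_filter.1 hp).2, pow_one]
  rw [hpow, hsimple, sqfullPart, prod_filter_mul_prod_filter_not]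
  exact Nat.prod_factorization_pow_eq_self hn

lemma le_sqfullPart {n p : ℕ} (hp : p ∈ n.primeFactors) (h2 : 2 ≤ n.factorization p) :
    p ≤ sqfullPart n := by
  have hpos : 0 < sqfullPart n :=
    prod_pos fun q hq => pow_pos (Nat.prime_of_mem_primeFactors (mem_filter.1 hq).1).pos _
  refine Nat.le_of_dvd hpos ((dvd_pow_self p (by omega : n.factorization p ≠ 0)).trans ?_)
  exact dvd_prod_of_mem (fun q => q ^ n.factorization q) (mem_filter.2 ⟨hp, h2⟩)

lemma P_mem_primeFactors {n : ℕ} (h : 1 < P n) : P n ∈ n.primeFactors := by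
  rcases n.primeFactors.eq_empty_or_nonempty with hempty | hne
  · simp [P, hempty] at h
  obtain ⟨p, hp, hsup⟩ := exists_mem_eq_sup _ hne _root_.id
  have hP : P n = p := by
    rw [P, hsup]
    exact max_eq_right (Nat.prime_of_mem_primeFactors hp).one_lt.le
  rwa [hP]

lemma P_mem_simplePrimeFactors {n : ℕ} (h : 1 < P n) (hs : sqfullPart n < P n) :
    P n ∈ simplePrimeFactors n := by
  have hmem := P_mem_primeFactors h
  have hpos := factorization_ne_zero_of_mem_primeFactors hmem
  refine mem_filter.2 ⟨hmem, ?_⟩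
  by_contra h1
  exact (le_sqfullPart hmem (by omega)).not_gt hs

lemma coprime_prod_of_mul_prod_eq {n M : ℕ} {B : Finset ℕ} (hB : B ⊆ simplePrimeFactors n)
    (h : M * ∏ p ∈ B, p = n) : M.Coprime (∏ p ∈ B, p) := by
  refine Nat.Coprime.prod_right fun p hp => ?_
  obtain ⟨hpn, hp1⟩ := mem_filter.1 (hB hp)
  have hprime := Nat.prime_of_mem_primeFactors hpn
  refine Nat.coprime_comm.1 (hprime.coprime_iff_not_dvd.2 fun hpM => ?_)
  have hsq : p ^ 2 ∣ n := h ▸ pow_two p ▸ mul_dvd_mul hpM (dvd_prod_of_mem _ hp)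
  have := (hprime.pow_dvd_iff_le_factorization (Nat.mem_primeFactors.1 hpn).2.2).1 hsq
  omega

lemma sigma_one_prod_primes {s : Finset ℕ} (hs : ∀ p ∈ s, p.Prime) :
    σ 1 (∏ p ∈ s, p) = ∏ p ∈ s, (p + 1) := by
  rw [isMultiplicative_sigma.map_prod_of_prime s hs]
  refine prod_congr rfl fun p hp => ?_
  simpa [add_comm] using sigma_one_apply_prime_pow (i := 1) (hs p hp)

lemma sigma_one_prod_primes_le {s : Finset ℕ} (hs : ∀ p ∈ s, p.Prime) {c : ℝ}
    (hc : ∀ p ∈ s, (p : ℝ)⁻¹ ≤ c) :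
    (σ 1 (∏ p ∈ s, p) : ℝ) ≤ (∏ p ∈ s, p : ℕ) * (1 + c) ^ s.card := by
  rw [sigma_one_prod_primes hs, ← prod_const, Nat.cast_prod, Nat.cast_prod, ← prod_mul_distrib]
  refine prod_le_prod (fun p _ => by positivity) fun p hp => ?_
  have hp0 : (0 : ℝ) < p := by exact_mod_cast (hs p hp).pos
  calc ((p + 1 : ℕ) : ℝ) = p * (1 + (p : ℝ)⁻¹) := by push_cast; field_simp
    _ ≤ p * (1 + c) := by gcongr; exact hc p hp

lemma two_mul_mul_le_of_coprime {M K : ℕ} (hcop : M.Coprime K)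
    (hab : 2 * (M * K) ≤ σ 1 (M * K)) (hdef : σ 1 M < 2 * M) :
    2 * M * K ≤ (2 * M - 1) * σ 1 K := by
  rw [isMultiplicative_sigma.map_mul_of_coprime hcop] at hab
  rw [mul_assoc]
  exact hab.trans (Nat.mul_le_mul_right _ (by omega))

lemma Pnd.two_mul_le_of_subset_simplePrimeFactors {n : ℕ} (hn : Pnd n) {B : Finset ℕ}
    (hB : B ⊆ simplePrimeFactors n) (hBne : B.Nonempty) {c : ℝ}
    (hc : ∀ p ∈ B, (p : ℝ)⁻¹ ≤ c) :
    2 * ((n / ∏ p ∈ B, p : ℕ) : ℝ) ≤ (2 * (n / ∏ p ∈ B, p : ℕ) - 1) * (1 + c) ^ B.card := by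
  obtain ⟨hn0, hab, hdef⟩ := hn
  have hBprime : ∀ p ∈ B, p.Prime := fun p hp =>
    Nat.prime_of_mem_primeFactors (simplePrimeFactors_subset n (hB hp))
  set K := ∏ p ∈ B, p
  set M := n / K
  have hMK : M * K = n :=
    Nat.div_mul_cancel (prod_dvd_of_subset_primeFactors (hB.trans (simplePrimeFactors_subset n)))
  have hK1 : 1 < K := by
    obtain ⟨p, hp⟩ := hBne
    exact (hBprime p hp).one_lt.trans_le
      (Nat.le_of_dvd (prod_pos fun q hq => (hBprime q hq).pos) (dvd_prod_of_mem _ hp))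
  have hM0 : 0 < M := Nat.pos_of_ne_zero fun h => by rw [h, zero_mul] at hMK; omega
  have hMn : M < n := hMK ▸ (Nat.lt_mul_iff_one_lt_right hM0).2 hK1
  have hnat := two_mul_mul_le_of_coprime (coprime_prod_of_mul_prod_eq hB hMK) (hMK ▸ hab)
    (hdef M ⟨K, hMK.symm⟩ hMn)
  have hreal : (2 * M * K : ℝ) ≤ (2 * M - 1) * (σ 1 K) := by
    have : 1 ≤ 2 * M := by omega
    exact_mod_cast hnat
  have hK0 : (0 : ℝ) < K := by exact_mod_cast (by omega : 0 < K)
  have h2M : (0 : ℝ) ≤ 2 * M - 1 := by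
    have : (1 : ℝ) ≤ M := by exact_mod_cast hM0
    linarith
  have := hreal.trans (mul_le_mul_of_nonneg_left (sigma_one_prod_primes_le hBprime hc) h2M)
  refine le_of_mul_le_mul_right ?_ hK0
  linarith

lemma Pnd.two_lt_of_subset_simplePrimeFactors {n : ℕ} (hn : Pnd n) {B : Finset ℕ}
    (hB : B ⊆ simplePrimeFactors n) (hBne : B.Nonempty) {U r x : ℝ} (hU : 1 < U)
    (hBU : ∀ p ∈ B, U ≤ p) (hnx : (n : ℝ) ≤ x) (hr : ((n / ∏ p ∈ B, p : ℕ) : ℝ) < r) :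
    2 < (2 - r⁻¹) * (1 + U⁻¹) ^ (log x / log U) := by
  have hBdvd : ∏ p ∈ B, p ∣ n :=
    prod_dvd_of_subset_primeFactors (hB.trans (simplePrimeFactors_subset n))
  have hcard : (B.card : ℝ) ≤ log x / log U := by
    refine card_le_log_div_log hU hBU ?_
    rw [← Nat.cast_prod]
    exact (Nat.cast_le.2 (Nat.le_of_dvd hn.1 hBdvd)).trans hnx
  have hpow : (1 + U⁻¹) ^ B.card ≤ (1 + U⁻¹) ^ (log x / log U) := by
    rw [← rpow_natCast]
    exact rpow_le_rpow_of_exponent_le (by simp [(zero_lt_one.trans hU).le]) hcard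
  have hM : (1 : ℝ) ≤ (n / ∏ p ∈ B, p : ℕ) := by
    exact_mod_cast Nat.div_pos (Nat.le_of_dvd hn.1 hBdvd) (Nat.pos_of_dvd_of_pos hBdvd hn.1)
  refine two_lt_of_two_mul_le_sub_one_mul hM hr (by positivity) ?_
  refine (hn.two_mul_le_of_subset_simplePrimeFactors hB hBne (c := U⁻¹) fun p hp => ?_).trans ?_
  · exact inv_anti₀ (by linarith) (hBU p hp)
  · exact mul_le_mul_of_nonneg_left hpow (by linarith)

lemma exists_squarefree_dvd_le_lt_mul_self {n : ℕ} {s : Finset ℕ} (hs : s ⊆ n.primeFactors)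
    {t : ℝ} (ht : 1 < t) (hst : ∀ p ∈ s, (p : ℝ) < t) (hle : t ≤ ∏ p ∈ s, (p : ℝ)) :
    ∃ d : ℕ, d ∣ n ∧ Squarefree d ∧ t ≤ d ∧ d < t * t := by
  obtain ⟨u, hu, htu, hut⟩ :=
    exists_subset_le_prod_lt_mul_self s ht (fun p _ => Nat.cast_nonneg p) hst hle
  refine ⟨∏ p ∈ u, p, prod_dvd_of_subset_primeFactors (hu.trans hs),
    squarefree_prod_of_subset_primeFactors (hu.trans hs), ?_, ?_⟩ <;> push_cast <;> assumption

lemma div_prod_filter_not_simplePrimeFactors {n : ℕ} (hn : n ≠ 0) (q : ℕ → Prop)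
    [DecidablePred q] :
    n / ∏ p ∈ simplePrimeFactors n with ¬ q p, p =
      sqfullPart n * ∏ p ∈ simplePrimeFactors n with q p, p := by
  refine Nat.div_eq_of_eq_mul_left (prod_pos fun p hp => ?_) ?_
  · exact Nat.pos_of_mem_primeFactors (simplePrimeFactors_subset n (mem_filter.1 hp).1)
  · rw [mul_assoc, prod_filter_mul_prod_filter_not, sqfullPart_mul_prod_simplePrimeFactors hn]

theorem pnd_has_medium_squarefree_divisor_general (x y a b : ℝ)
    (hy : 8 < y)
    (ha : 0 < a) (ha' : a < 1 / 3) (hb : b = 3 * a / 2)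
    (hcond : (2 - y ^ (-b)) *
        (1 + Real.sqrt (2 / y)) ^ (2 * Real.log x / Real.log (y / 2)) ≤ 2)
    (n : ℕ) (hn : Pnd n) (hnx : (n : ℝ) ≤ x)
    (hP : y < (P n : ℝ)) (hsf : (sqfullPart n : ℝ) < y ^ a) :
    ∃ d : ℕ, d ∣ n ∧ Squarefree d ∧
      y ^ (b / 3) ≤ (d : ℝ) ∧ (d : ℝ) ≤ y ^ ((1 : ℝ) / 2) / Real.sqrt 2 := by
  have hy0 : 0 < y := by linarith
  set t := y ^ (b / 3)
  have ht1 : 1 < t := one_lt_rpow (by linarith) (by linarith)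
  have htt : t * t ≤ √(y / 2) := rpow_mul_self_le_sqrt_half hy.le (by linarith)
  rw [← sqrt_eq_rpow, ← sqrt_div hy0.le]
  by_contra! hno
  set Sm : Finset ℕ := {p ∈ simplePrimeFactors n | (p : ℝ) < t}
  set B : Finset ℕ := {p ∈ simplePrimeFactors n | ¬ (p : ℝ) < t}
  have hsmall : ∏ p ∈ Sm, (p : ℝ) < t := by
    by_contra! hle
    obtain ⟨d, hdn, hd, htd, hdt⟩ := exists_squarefree_dvd_le_lt_mul_self
      ((filter_subset _ _).trans (simplePrimeFactors_subset n)) ht1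
      (fun p hp => (mem_filter.1 hp).2) hle
    exact (hno d hdn hd htd).not_gt (hdt.trans_le htt)
  have hlarge : ∀ p ∈ B, √(y / 2) ≤ p := fun p hp =>
    have hpn := simplePrimeFactors_subset n (mem_filter.1 hp).1
    (hno p (Nat.dvd_of_mem_primeFactors hpn) (Nat.prime_of_mem_primeFactors hpn).prime.squarefree
      (not_lt.1 (mem_filter.1 hp).2)).le
  have hPB : P n ∈ B := by
    have hya : y ^ a < y := rpow_lt_self_of_one_lt (by linarith) (by linarith)
    have hty : t ≤ y := rpow_le_self_of_one_le (by linarith) (by linarith)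
    refine mem_filter.2 ⟨P_mem_simplePrimeFactors ?_ ?_, not_lt.2 (by linarith)⟩
    · exact_mod_cast (by linarith : (1 : ℝ) < P n)
    · exact_mod_cast hsf.trans (hya.trans hP)
  have hcofactor : ((n / ∏ p ∈ B, p : ℕ) : ℝ) < y ^ b := by
    rw [div_prod_filter_not_simplePrimeFactors hn.1.ne', Nat.cast_mul, Nat.cast_prod]
    calc _ < y ^ a * t := mul_lt_mul'' hsf hsmall (by positivity) (by positivity)
      _ = y ^ b := by rw [← rpow_add hy0, hb]; ring_nf
  have hU : 1 < √(y / 2) := lt_sqrt (by norm_num) |>.2 (by linarith)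
  have key := hn.two_lt_of_subset_simplePrimeFactors (filter_subset _ _) ⟨_, hPB⟩ hU hlarge hnx
    hcofactor
  rw [← sqrt_inv, inv_div, log_sqrt (by positivity), div_div_eq_mul_div, mul_comm (log x),
    ← rpow_neg hy0.le] at key
  exact key.not_ge hcond

/-- Let `x > y > 8`, `a ∈ (0, 1/3)`, `b = 3a/2` with `b ∈ (0, 1/2)` and
`2 ≥ (2 − y^(−b))(1 + √(2/y))^(2 log x / log(y/2))`.  Then every pnd `n ≤ x`
with `P n > y` and square-full part `< y^a` has a squarefree divisor `d` with
`y^(b/3) ≤ d ≤ y^(1/2)/√2`. -/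
theorem pnd_has_medium_squarefree_divisor (x y a b : ℝ)
    (hy : 8 < y) (hxy : y < x)
    (ha : 0 < a) (ha' : a < 1 / 3) (hb : b = 3 * a / 2)
    (hb0 : 0 < b) (hb2 : b < 1 / 2)
    (hcond : (2 - y ^ (-b)) *
        (1 + Real.sqrt (2 / y)) ^ (2 * Real.log x / Real.log (y / 2)) ≤ 2)
    (n : ℕ) (hn : Pnd n) (hnx : (n : ℝ) ≤ x)
    (hP : y < (P n : ℝ)) (hsf : (sqfullPart n : ℝ) < y ^ a) :
    ∃ d : ℕ, d ∣ n ∧ Squarefree d ∧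
      y ^ (b / 3) ≤ (d : ℝ) ∧ (d : ℝ) ≤ y ^ ((1 : ℝ) / 2) / Real.sqrt 2 :=
  pnd_has_medium_squarefree_divisor_general x y a b hy ha ha' hb hcond n hn hnx hP hsf
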